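/- arXiv:0809.0433 — 4 statements merged into one kernel-verified Lean document; each statement's English description precedes it below -/
import Mathlib

section
/- A group E is isomorphic to a crossed product of the infinite cyclic group by a finite cyclic group of order n (equivalently, E has a normal subgroup N isomorphic to ℤ such that E/N is isomorphic to ZMod n) if and only if: when n is odd, E is isomorphic to the presented group on generators g, h with relators g·h·g^(−1)·h^(−1) and h^n·g^(−t) for some integer t; when n is even, E is isomorphic either to such a presented group ⟨g, h ∣ g·h·g^(−1)·h^(−1), h^n·g^(−t)⟩ for some integer t, or to the presented group ⟨g, h ∣ h^n, g·h·g·h^(−1)⟩. -/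
/-!
Write the extension as a surjection `χ : E → ℤ/n` whose kernel is generated by an element `a`
of infinite order, and pick `b` with `χ b = 1`. Conjugation by `b` is an automorphism of
`⟨a⟩ ≅ ℤ`, so `b a b⁻¹ = a^{±1}`, and `bⁿ = aᵗ` for some `t`. If the sign is `+`, then
`g ↦ a, h ↦ b` identifies `E` with `⟨g, h ∣ [g, h], hⁿg⁻ᵗ⟩`. If it is `−`, conjugating
`bⁿ = aᵗ` by `b` gives `t = 0`, and `bⁿ = 1` conjugates `a` to `a^{(-1)ⁿ}`, so `n` is even and
`E ≅ ⟨g, h ∣ hⁿ, ghgh⁻¹⟩`. These maps are bijective by a five-lemma argument: both sides are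
extensions of `⟨g⟩ ≅ ⟨a⟩` by `ℤ/n`, compatibly. Conversely, in either presented group every
element is `gⁱhʲ`, so the character `g ↦ 0, h ↦ 1` has kernel `⟨g⟩`, and `g` has infinite order,
as its image in `ℤ` (resp. in the infinite dihedral group) shows.
-/

open Subgroup Multiplicative PresentedGroup

section Generalities

variable {G H M : Type*} [Group G] [Group H] [Group M]

lemma zpowers_normal_of_conj {g h : G} (hgen : closure {g, h} = ⊤)
    (hconj : h * g * h⁻¹ = g ∨ h * g * h⁻¹ = g⁻¹) : (zpowers g).Normal := by
  rw [← normalizer_eq_top_iff, eq_top_iff, ← hgen, closure_le, Set.insert_subset_iff,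
    Set.singleton_subset_iff]
  refine ⟨le_normalizer (mem_zpowers g), ?_⟩
  rw [SetLike.mem_coe, mem_normalizer_iff_map_conj_eq, MonoidHom.map_zpowers]
  rcases hconj with hconj | hconj <;> simp [hconj]

lemma conj_eq_self_or_inv {a : G} [(zpowers a).Normal] (ha : ¬IsOfFinOrder a) (b : G) :
    b * a * b⁻¹ = a ∨ b * a * b⁻¹ = a⁻¹ := by
  have hmap : zpowers a = zpowers (b * a * b⁻¹) := by
    have := MonoidHom.map_zpowers (MulAut.conj b : G →* G) a
    rwa [normal_iff_map_conj_eq.1 ‹_› b] at this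
  exact ((zpowers_eq_zpowers_iff ha).1 hmap).imp Eq.symm Eq.symm

lemma exists_eq_zpow_mul_zpow {g h : G} [(zpowers g).Normal] (hgen : closure {g, h} = ⊤)
    (x : G) : ∃ i j : ℤ, g ^ i * h ^ j = x := by
  have hx : x ∈ ((zpowers g ⊔ zpowers h : Subgroup G) : Set G) := by
    rw [zpowers_eq_closure, zpowers_eq_closure, ← Subgroup.closure_union, ← Set.insert_eq, hgen]
    trivial
  rw [normal_mul] at hx
  obtain ⟨_, ⟨i, rfl⟩, _, ⟨j, rfl⟩, hx⟩ := hx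
  exact ⟨i, j, hx⟩

lemma surjective_of_apply_eq_ofAdd_one {n : ℕ} (χ : G →* Multiplicative (ZMod n)) {h : G}
    (hχh : χ h = ofAdd 1) : Function.Surjective χ := by
  intro z
  obtain ⟨j, hj⟩ := ZMod.intCast_surjective z.toAdd
  exact ⟨h ^ j, by rw [map_zpow, hχh, ← ofAdd_zsmul, zsmul_one, hj, ofAdd_toAdd]⟩

lemma ker_eq_zpowers_of_generators {n : ℕ} (χ : G →* Multiplicative (ZMod n)) {g h : G}
    (hgen : closure {g, h} = ⊤) (hconj : h * g * h⁻¹ = g ∨ h * g * h⁻¹ = g⁻¹)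
    (hpow : h ^ n ∈ zpowers g) (hχg : χ g = 1) (hχh : χ h = ofAdd 1) :
    χ.ker = zpowers g := by
  have := zpowers_normal_of_conj hgen hconj
  refine le_antisymm (fun x hx => ?_) (zpowers_le.2 hχg)
  obtain ⟨i, j, rfl⟩ := exists_eq_zpow_mul_zpow hgen x
  rw [MonoidHom.mem_ker, map_mul, map_zpow, map_zpow, hχg, hχh, one_zpow, one_mul,
    ← ofAdd_zsmul, zsmul_one, ofAdd_eq_one, ZMod.intCast_zmod_eq_zero_iff_dvd] at hx
  obtain ⟨m, rfl⟩ := hx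
  rw [zpow_mul, zpow_natCast]
  exact mul_mem (zpow_mem (mem_zpowers g) i) (zpow_mem hpow m)

lemma bijective_of_ker_eq_zpowers (f : G →* H) {χ : G →* M} {χ' : H →* M} (hf : χ'.comp f = χ)
    (hχ : Function.Surjective χ) {g : G} (hker : χ.ker = zpowers g)
    (hker' : χ'.ker = zpowers (f g)) (hg : ¬IsOfFinOrder (f g)) : Function.Bijective f := by
  constructor
  · rw [injective_iff_map_eq_one]
    intro x hx
    have hxker : x ∈ χ.ker := by rw [← hf, MonoidHom.mem_ker, MonoidHom.comp_apply, hx, map_one]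
    obtain ⟨k, rfl⟩ := mem_zpowers_iff.1 (hker ▸ hxker)
    rw [map_zpow, ← zpow_zero (f g)] at hx
    rw [injective_zpow_iff_not_isOfFinOrder.2 hg hx, zpow_zero]
  · intro y
    obtain ⟨x, hx⟩ := hχ (χ' y)
    have hy : y * (f x)⁻¹ ∈ χ'.ker := by
      rw [MonoidHom.mem_ker, map_mul, map_inv, ← MonoidHom.comp_apply, hf, hx, mul_inv_cancel]
    obtain ⟨k, hk⟩ := mem_zpowers_iff.1 (hker' ▸ hy)
    exact ⟨g ^ k * x, by rw [map_mul, map_zpow, hk, inv_mul_cancel_right]⟩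

lemma Subgroup.exists_eq_zpowers_of_mulEquiv_int {N : Subgroup G}
    (φ : N ≃* Multiplicative ℤ) : ∃ a : G, N = zpowers a ∧ ¬IsOfFinOrder a := by
  set a₀ : N := φ.symm (ofAdd 1)
  refine ⟨a₀, le_antisymm (fun x hx => ?_) (zpowers_le.2 a₀.2), ?_⟩
  · refine ⟨(φ ⟨x, hx⟩).toAdd, ?_⟩
    have : a₀ ^ (φ ⟨x, hx⟩).toAdd = ⟨x, hx⟩ := φ.injective <| by
      rw [map_zpow, MulEquiv.apply_symm_apply, ← ofAdd_zsmul, zsmul_one, Int.cast_id,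
        ofAdd_toAdd]
    exact congrArg Subtype.val this
  · intro ha₀
    have := φ.toMonoidHom.isOfFinOrder (Submonoid.isOfFinOrder_coe.1 ha₀)
    simp [a₀, isOfFinOrder_iff_eq_one] at this

lemma nonempty_zpowers_mulEquiv_int {a : G} (ha : ¬IsOfFinOrder a) :
    Nonempty (zpowers a ≃* Multiplicative ℤ) :=
  have : Infinite (zpowers a) := (infinite_zpowers.2 ha).to_subtype
  ⟨intCyclicMulEquiv.symm⟩

lemma even_of_conj_eq_inv {n : ℕ} {a b : G} (hconj : b * a * b⁻¹ = a⁻¹) (hb : b ^ n = 1)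
    (ha : a⁻¹ ≠ a) : Even n := by
  have hsemi : SemiconjBy b a a⁻¹ := by rw [SemiconjBy, ← hconj, inv_mul_cancel_right]
  have hsq : Commute (b ^ 2) a :=
    pow_two b ▸ SemiconjBy.mul_left (by simpa using hsemi.inv_right) hsemi
  by_contra hn
  obtain ⟨m, rfl⟩ := Nat.not_even_iff_odd.1 hn
  have : SemiconjBy (b ^ (2 * m + 1)) a a⁻¹ := by
    rw [pow_succ, pow_mul]
    exact SemiconjBy.mul_left (hsq.pow_left m).inv_right hsemi
  exact ha (by simpa [hb, SemiconjBy] using this.symm)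

lemma eq_zero_of_conj_eq_inv {n : ℕ} {t : ℤ} {a b : G} (hconj : b * a * b⁻¹ = a⁻¹)
    (hb : b ^ n = a ^ t) (ha : ¬IsOfFinOrder a) : t = 0 := by
  have h : a ^ (-t) = a ^ t := calc
    a ^ (-t) = (b * a * b⁻¹) ^ t := by rw [hconj, inv_zpow']
    _ = b * b ^ n * b⁻¹ := by rw [conj_zpow, hb]
    _ = a ^ t := by rw [← pow_succ', pow_succ, mul_inv_cancel_right, hb]
  have := injective_zpow_iff_not_isOfFinOrder.2 ha h
  omega

end Generalities

def IsIntByZModExtension (n : ℕ) (G : Type*) [Group G] : Prop :=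
  ∃ (χ : G →* Multiplicative (ZMod n)) (a : G),
    Function.Surjective χ ∧ χ.ker = zpowers a ∧ ¬IsOfFinOrder a

lemma isIntByZModExtension_iff (n : ℕ) (E : Type*) [Group E] :
    IsIntByZModExtension n E ↔
      ∃ N : Subgroup E, ∃ hN : N.Normal, Nonempty (N ≃* Multiplicative ℤ) ∧
        (haveI := hN; Nonempty (E ⧸ N ≃* Multiplicative (ZMod n))) := by
  constructor
  · rintro ⟨χ, a, hχ, hker, ha⟩
    exact ⟨χ.ker, inferInstance, hker ▸ nonempty_zpowers_mulEquiv_int ha,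
      ⟨QuotientGroup.quotientKerEquivOfSurjective χ hχ⟩⟩
  · rintro ⟨N, hN, ⟨φ⟩, ⟨ψ⟩⟩
    obtain ⟨a, rfl, ha⟩ := N.exists_eq_zpowers_of_mulEquiv_int φ
    refine ⟨(ψ : E ⧸ zpowers a →* _).comp (QuotientGroup.mk' _), a,
      ψ.surjective.comp (QuotientGroup.mk'_surjective _), ?_, ha⟩
    rw [MonoidHom.ker_mulEquiv_comp, QuotientGroup.ker_mk']

lemma IsIntByZModExtension.of_mulEquiv {n : ℕ} {G H : Type*} [Group G] [Group H]
    (h : IsIntByZModExtension n H) (e : G ≃* H) : IsIntByZModExtension n G := by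
  obtain ⟨χ, a, hχ, hker, ha⟩ := h
  refine ⟨χ.comp e, e.symm a, hχ.comp e.surjective, ?_, ?_⟩
  · rw [← MonoidHom.comap_ker, hker, comap_equiv_eq_map_symm, MonoidHom.map_zpowers]
    rfl
  · intro h
    exact ha (by simpa using e.toMonoidHom.isOfFinOrder h)

lemma PresentedGroup.closure_of_zero_of_one (rels : Set (FreeGroup (Fin 2))) :
    closure {of 0, of 1} = (⊤ : Subgroup (PresentedGroup rels)) := by
  rw [← closure_range_of]
  congr 1
  ext
  simp [Fin.exists_fin_two, eq_comm]

lemma PresentedGroup.nonempty_mulEquiv_of_ker_eq_zpowers {n : ℕ} {rels : Set (FreeGroup (Fin 2))}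
    {E : Type*} [Group E] {ψ : PresentedGroup rels →* Multiplicative (ZMod n)}
    (hψ₀ : ψ (of 0) = 1) (hψ₁ : ψ (of 1) = ofAdd 1) (hψ : ψ.ker = zpowers (of 0))
    {χ : E →* Multiplicative (ZMod n)} {a b : E} (hker : χ.ker = zpowers a)
    (ha : ¬IsOfFinOrder a) (hχb : χ b = ofAdd 1)
    (hrels : ∀ r ∈ rels, FreeGroup.lift ![a, b] r = 1) :
    Nonempty (E ≃* PresentedGroup rels) := by
  have hχa : χ a = 1 := by rw [← MonoidHom.mem_ker, hker]; exact mem_zpowers a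
  have hf : χ.comp (toGroup hrels) = ψ := PresentedGroup.ext fun i => by
    fin_cases i <;> simp [toGroup.of, hχa, hχb, hψ₀, hψ₁]
  exact ⟨(MulEquiv.ofBijective _ (bijective_of_ker_eq_zpowers _ hf
    (surjective_of_apply_eq_ofAdd_one ψ hψ₁) hψ
    (by simpa [toGroup.of] using hker) (by simpa [toGroup.of] using ha))).symm⟩

section CommRels

variable (n : ℕ) (t : ℤ)

abbrev commRels : Set (FreeGroup (Fin 2)) :=
  {FreeGroup.of 0 * FreeGroup.of 1 * (FreeGroup.of 0)⁻¹ * (FreeGroup.of 1)⁻¹,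
    FreeGroup.of 1 ^ n * FreeGroup.of 0 ^ (-t)}

lemma commRels_conj : (of 1 : PresentedGroup (commRels n t)) * of 0 * (of 1)⁻¹ = of 0 := by
  have h : (of 0 : PresentedGroup (commRels n t)) * of 1 * (of 0)⁻¹ * (of 1)⁻¹ = 1 :=
    one_of_mem (by simp)
  exact mul_inv_eq_of_eq_mul (commutatorElement_eq_one_iff_mul_comm.1 h).symm

lemma commRels_pow : (of 1 : PresentedGroup (commRels n t)) ^ n = of 0 ^ t := by
  have h : (of 1 : PresentedGroup (commRels n t)) ^ n * of 0 ^ (-t) = 1 := one_of_mem (by simp)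
  rwa [zpow_neg, mul_inv_eq_one] at h

def commChar : PresentedGroup (commRels n t) →* Multiplicative (ZMod n) :=
  toGroup (f := ![1, ofAdd 1]) (by
    rintro r (rfl | rfl)
    · simp
    · simp [← ofAdd_nsmul])

@[simp] lemma commChar_of_zero : commChar n t (of 0) = 1 := toGroup.of _

@[simp] lemma commChar_of_one : commChar n t (of 1) = ofAdd 1 := toGroup.of _

lemma commChar_ker : (commChar n t).ker = zpowers (of 0) :=
  ker_eq_zpowers_of_generators _ (closure_of_zero_of_one _) (.inl (commRels_conj n t))
    ⟨t, (commRels_pow n t).symm⟩ (commChar_of_zero n t) (commChar_of_one n t)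

lemma not_isOfFinOrder_commRels_of_zero (hn : 0 < n) :
    ¬IsOfFinOrder (of 0 : PresentedGroup (commRels n t)) := by
  let w : PresentedGroup (commRels n t) →* Multiplicative ℤ :=
    toGroup (f := ![ofAdd (n : ℤ), ofAdd t]) (by
      rintro r (rfl | rfl) <;> rw [← toAdd_eq_zero] <;> simp [mul_comm])
  intro h
  have := w.isOfFinOrder h
  simp [w, isOfFinOrder_iff_eq_one] at this
  omega

lemma commRels_isIntByZModExtension (hn : 0 < n) :
    IsIntByZModExtension n (PresentedGroup (commRels n t)) :=
  ⟨commChar n t, of 0, surjective_of_apply_eq_ofAdd_one _ (commChar_of_one n t), commChar_ker n t,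
    not_isOfFinOrder_commRels_of_zero n t hn⟩

lemma nonempty_mulEquiv_commRels {E : Type*} [Group E] {χ : E →* Multiplicative (ZMod n)}
    {a b : E} (hker : χ.ker = zpowers a) (ha : ¬IsOfFinOrder a) (hχb : χ b = ofAdd 1)
    (hconj : b * a * b⁻¹ = a) (hb : b ^ n = a ^ t) :
    Nonempty (E ≃* PresentedGroup (commRels n t)) := by
  refine nonempty_mulEquiv_of_ker_eq_zpowers (commChar_of_zero n t) (commChar_of_one n t)
    (commChar_ker n t) hker ha hχb ?_
  rintro r (rfl | rfl)
  · simp only [map_mul, map_inv, FreeGroup.lift_apply_of]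
    exact commutatorElement_eq_one_iff_mul_comm.2 (mul_inv_eq_iff_eq_mul.1 hconj).symm
  · simp [hb]

end CommRels

section TwistRels

variable (n : ℕ)

abbrev twistRels : Set (FreeGroup (Fin 2)) :=
  {FreeGroup.of 1 ^ n, FreeGroup.of 0 * FreeGroup.of 1 * FreeGroup.of 0 * (FreeGroup.of 1)⁻¹}

lemma twistRels_conj : (of 1 : PresentedGroup (twistRels n)) * of 0 * (of 1)⁻¹ = (of 0)⁻¹ := by
  have h : (of 0 : PresentedGroup (twistRels n)) * of 1 * of 0 * (of 1)⁻¹ = 1 :=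
    one_of_mem (by simp)
  rw [mul_assoc (of 0 * of 1), mul_assoc] at h
  exact eq_inv_of_mul_eq_one_right h

lemma twistRels_pow : (of 1 : PresentedGroup (twistRels n)) ^ n = 1 := one_of_mem (by simp)

def twistChar : PresentedGroup (twistRels n) →* Multiplicative (ZMod n) :=
  toGroup (f := ![1, ofAdd 1]) (by
    rintro r (rfl | rfl)
    · simp [← ofAdd_nsmul]
    · simp)

@[simp] lemma twistChar_of_zero : twistChar n (of 0) = 1 := toGroup.of _

@[simp] lemma twistChar_of_one : twistChar n (of 1) = ofAdd 1 := toGroup.of _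

lemma twistChar_ker : (twistChar n).ker = zpowers (of 0) :=
  ker_eq_zpowers_of_generators _ (closure_of_zero_of_one _) (.inr (twistRels_conj n))
    (twistRels_pow n ▸ one_mem _) (twistChar_of_zero n) (twistChar_of_one n)

lemma not_isOfFinOrder_twistRels_of_zero (hn : Even n) :
    ¬IsOfFinOrder (of 0 : PresentedGroup (twistRels n)) := by
  let w : PresentedGroup (twistRels n) →* DihedralGroup 0 :=
    toGroup (f := ![.r 1, .sr 0]) (by
      obtain ⟨m, rfl⟩ := hn
      rintro r (rfl | rfl)
      · simp [← two_mul, pow_mul, sq]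
      · simp)
  intro h
  have := w.isOfFinOrder h
  exact orderOf_eq_zero_iff.1 DihedralGroup.orderOf_r_one (by simpa [w] using this)

lemma twistRels_isIntByZModExtension (hn : Even n) :
    IsIntByZModExtension n (PresentedGroup (twistRels n)) :=
  ⟨twistChar n, of 0, surjective_of_apply_eq_ofAdd_one _ (twistChar_of_one n), twistChar_ker n,
    not_isOfFinOrder_twistRels_of_zero n hn⟩

lemma nonempty_mulEquiv_twistRels {E : Type*} [Group E] {χ : E →* Multiplicative (ZMod n)}
    {a b : E} (hker : χ.ker = zpowers a) (ha : ¬IsOfFinOrder a) (hχb : χ b = ofAdd 1)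
    (hconj : b * a * b⁻¹ = a⁻¹) (hb : b ^ n = 1) :
    Nonempty (E ≃* PresentedGroup (twistRels n)) := by
  refine nonempty_mulEquiv_of_ker_eq_zpowers (twistChar_of_zero n) (twistChar_of_one n)
    (twistChar_ker n) hker ha hχb ?_
  rintro r (rfl | rfl)
  · simp [hb]
  · simp [mul_assoc, ← mul_assoc b, hconj]

end TwistRels

lemma IsIntByZModExtension.exists_mulEquiv_presentedGroup {n : ℕ} {E : Type*} [Group E]
    (h : IsIntByZModExtension n E) :
    (∃ t : ℤ, Nonempty (E ≃* PresentedGroup (commRels n t))) ∨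
      (Even n ∧ Nonempty (E ≃* PresentedGroup (twistRels n))) := by
  obtain ⟨χ, a, hχ, hker, ha⟩ := h
  have : (zpowers a).Normal := hker ▸ χ.normal_ker
  obtain ⟨b, hχb⟩ := hχ (ofAdd 1)
  obtain ⟨t, ht⟩ : ∃ t : ℤ, a ^ t = b ^ n := by
    rw [← mem_zpowers_iff, ← hker, MonoidHom.mem_ker, map_pow, hχb, ← ofAdd_nsmul,
      nsmul_one, ZMod.natCast_self, ofAdd_zero]
  rcases conj_eq_self_or_inv ha b with hconj | hconj
  · exact .inl ⟨t, nonempty_mulEquiv_commRels n t hker ha hχb hconj ht.symm⟩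
  · obtain rfl := eq_zero_of_conj_eq_inv hconj ht.symm ha
    rw [zpow_zero, eq_comm] at ht
    have ha' : a⁻¹ ≠ a := fun h => ha <| isOfFinOrder_iff_pow_eq_one.2
      ⟨2, two_pos, by rw [sq]; exact inv_eq_iff_mul_eq_one.1 h⟩
    exact .inr ⟨even_of_conj_eq_inv hconj ht ha',
      nonempty_mulEquiv_twistRels n hker ha hχb hconj ht⟩

/-- A group `E` is an extension of the infinite cyclic group by a cyclic group of order `n`
iff: when `n` is odd, `E ≅ ⟨g, h ∣ gh = hg, hⁿ = gᵗ⟩` for some integer `t`; when `n` is even,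
`E ≅ ⟨g, h ∣ gh = hg, hⁿ = gᵗ⟩` for some integer `t`, or `E ≅ ⟨g, h ∣ hⁿ = 1, ghg = h⟩`. -/
theorem crossed_product_infinite_cyclic_by_finite_cyclic
    (n : ℕ) (hn : 1 ≤ n) (E : Type*) [Group E] :
    (∃ N : Subgroup E, ∃ hN : N.Normal,
        Nonempty (N ≃* Multiplicative ℤ) ∧
        (haveI := hN; Nonempty (E ⧸ N ≃* Multiplicative (ZMod n)))) ↔
      ((Odd n → ∃ t : ℤ,
          Nonempty (E ≃* PresentedGroup
            ({FreeGroup.of 0 * FreeGroup.of 1 * (FreeGroup.of 0)⁻¹ * (FreeGroup.of 1)⁻¹,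
              FreeGroup.of 1 ^ n * FreeGroup.of 0 ^ (-t)} : Set (FreeGroup (Fin 2))))) ∧
        (Even n →
          ((∃ t : ℤ,
            Nonempty (E ≃* PresentedGroup
              ({FreeGroup.of 0 * FreeGroup.of 1 * (FreeGroup.of 0)⁻¹ * (FreeGroup.of 1)⁻¹,
                FreeGroup.of 1 ^ n * FreeGroup.of 0 ^ (-t)} : Set (FreeGroup (Fin 2))))) ∨
          Nonempty (E ≃* PresentedGroup
            ({FreeGroup.of 1 ^ n,
              FreeGroup.of 0 * FreeGroup.of 1 * FreeGroup.of 0 * (FreeGroup.of 1)⁻¹} :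
              Set (FreeGroup (Fin 2))))))) := by
  rw [← isIntByZModExtension_iff]
  constructor
  · intro h
    rcases h.exists_mulEquiv_presentedGroup with ⟨t, e⟩ | ⟨heven, e⟩
    · exact ⟨fun _ => ⟨t, e⟩, fun _ => .inl ⟨t, e⟩⟩
    · exact ⟨fun hodd => absurd heven (Nat.not_even_iff_odd.2 hodd), fun _ => .inr e⟩
  · rintro ⟨hodd, heven⟩
    rcases n.even_or_odd with he | ho
    · rcases heven he with ⟨t, ⟨e⟩⟩ | ⟨⟨e⟩⟩
      · exact (commRels_isIntByZModExtension n t hn).of_mulEquiv e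
      · exact (twistRels_isIntByZModExtension n he).of_mulEquiv e
    · obtain ⟨t, ⟨e⟩⟩ := hodd ho
      exact (commRels_isIntByZModExtension n t hn).of_mulEquiv e
end

section
/- A group E is isomorphic to a crossed product of the infinite cyclic group by the infinite cyclic group (equivalently, E has a normal subgroup N isomorphic to ℤ such that E/N is isomorphic to ℤ) if and only if E is isomorphic to ℤ × ℤ or E is isomorphic to the presented group on two generators g₁, g₂ with the single relator g₁·g₂·g₁·g₂^(−1) (the Klein bottle group). -/
/-!
An extension `1 → ℤ → E → ℤ → 1` splits because `ℤ` is free, so `E ≅ ℤ ⋊[φ] ℤ`. As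
`Aut ℤ = {±1}`, either `φ` is trivial and `E ≅ ℤ × ℤ`, or the generator acts by inversion; in the
latter case the relation `g₁ g₂ g₁ = g₂` says exactly that `g₂` conjugates `g₁` to `g₁⁻¹`, which
identifies `E` with the Klein bottle group.
-/

open Multiplicative SemidirectProduct

namespace GroupExtension

variable {N E E' G : Type*} [Group N] [Group E] [Group E'] [Group G]

theorem exists_normal_iff_nonempty :
    (∃ K : Subgroup E, ∃ hK : K.Normal,
        Nonempty (K ≃* N) ∧ (haveI := hK; Nonempty (E ⧸ K ≃* G))) ↔
      Nonempty (GroupExtension N E G) := by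
  constructor
  · rintro ⟨K, hK, ⟨α⟩, ⟨β⟩⟩
    have hrange : (K.subtype.comp (α.symm : N →* K)).range = K := by
      rw [MonoidHom.range_comp, MonoidHom.range_eq_top.mpr α.symm.surjective,
        ← MonoidHom.range_eq_map, Subgroup.range_subtype]
    refine ⟨{ inl := K.subtype.comp (α.symm : N →* K)
              rightHom := (β : E ⧸ K →* G).comp (QuotientGroup.mk' K)
              inl_injective := K.subtype_injective.comp α.symm.injective
              range_inl_eq_ker_rightHom := ?_
              rightHom_surjective := β.surjective.comp (QuotientGroup.mk'_surjective K) }⟩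
    rw [hrange, MonoidHom.ker_mulEquiv_comp, QuotientGroup.ker_mk']
  · rintro ⟨S⟩
    exact ⟨S.inl.range, inferInstance, ⟨(MonoidHom.ofInjective S.inl_injective).symm⟩,
      ⟨S.quotientRangeInlEquivRight⟩⟩

def ofMulEquiv (S : GroupExtension N E G) (f : E ≃* E') : GroupExtension N E' G where
  inl := (f : E →* E').comp S.inl
  rightHom := S.rightHom.comp (f.symm : E' →* E)
  inl_injective := f.injective.comp S.inl_injective
  range_inl_eq_ker_rightHom := by
    rw [MonoidHom.range_comp, ← MonoidHom.comap_ker, S.range_inl_eq_ker_rightHom,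
      Subgroup.map_equiv_eq_comap_symm]
  rightHom_surjective := S.rightHom_surjective.comp f.symm.surjective

noncomputable def splittingOfInt (S : GroupExtension N E (Multiplicative ℤ)) : S.Splitting :=
  have he := S.rightHom_surjective (ofAdd 1)
  { toMonoidHom := zpowersHom E he.choose
    rightInverse_rightHom := DFunLike.congr_fun
      (show S.rightHom.comp (zpowersHom E he.choose) = MonoidHom.id _ from
        MonoidHom.ext_mint (by simpa using he.choose_spec)) }

theorem nonempty_int_iff :
    Nonempty (GroupExtension N E (Multiplicative ℤ)) ↔
      ∃ φ : Multiplicative ℤ →* MulAut N, Nonempty (E ≃* N ⋊[φ] Multiplicative ℤ) := by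
  constructor
  · rintro ⟨S⟩
    exact ⟨_, ⟨S.splittingOfInt.semidirectProductMulEquiv.symm⟩⟩
  · rintro ⟨φ, ⟨f⟩⟩
    exact ⟨(SemidirectProduct.toGroupExtension φ).ofMulEquiv f.symm⟩

end GroupExtension

theorem MulAut.int_eq_one_or_eq_inv (σ : MulAut (Multiplicative ℤ)) :
    σ = 1 ∨ σ = MulEquiv.inv (Multiplicative ℤ) := by
  set k := toAdd (σ (ofAdd 1))
  have hσ (x : Multiplicative ℤ) : toAdd (σ x) = toAdd x * k := by
    calc toAdd (σ x) = toAdd (σ (ofAdd 1 ^ toAdd x)) := by simp [← ofAdd_zsmul]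
      _ = toAdd x * k := by rw [map_zpow, toAdd_zpow, smul_eq_mul]
  obtain ⟨x, hx⟩ := σ.surjective (ofAdd 1)
  have hk : toAdd x * k = 1 := by rw [← hσ, hx, toAdd_ofAdd]
  rcases Int.eq_one_or_neg_one_of_mul_eq_one' hk with ⟨-, h⟩ | ⟨-, h⟩
  · left; ext x; simp [hσ, h]
  · right; ext x; simp [hσ, h]

theorem MonoidHom.eq_one_or_eq_zpowersHom_inv
    (φ : Multiplicative ℤ →* MulAut (Multiplicative ℤ)) :
    φ = 1 ∨ φ = zpowersHom _ (MulEquiv.inv (Multiplicative ℤ)) := by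
  rcases MulAut.int_eq_one_or_eq_inv (φ (ofAdd 1)) with h | h
  · exact .inl (MonoidHom.ext_mint h)
  · exact .inr (MonoidHom.ext_mint (by simpa using h))

namespace SemidirectProduct

variable {N H : Type*} [Group N] [Group H] {φ : Multiplicative ℤ →* MulAut N}

theorem comp_aut_eq_conj_comp_of_ofAdd_one (fn : N →* H) (h : H)
    (hcomm : fn.comp (φ (ofAdd 1)).toMonoidHom = (MulAut.conj h).toMonoidHom.comp fn)
    (g : Multiplicative ℤ) :
    fn.comp (φ g).toMonoidHom = (MulAut.conj (zpowersHom H h g)).toMonoidHom.comp fn := by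
  have hconj (n : N) : fn (φ (ofAdd 1) n) = h * fn n * h⁻¹ := DFunLike.congr_fun hcomm n
  ext n
  simp only [MonoidHom.comp_apply, MulEquiv.coe_toMonoidHom, MulAut.conj_apply, zpowersHom_apply]
  induction g using Multiplicative.rec with | _ k => ?_
  induction k using Int.induction_on generalizing n with
  | zero => simp
  | succ k ih =>
    rw [ofAdd_add, map_mul, MulAut.mul_apply, ih, hconj]
    simp only [toAdd_mul, toAdd_ofAdd]
    group
  | pred k ih =>
    have hinv : fn ((φ (ofAdd 1))⁻¹ n) = h⁻¹ * fn n * h := by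
      calc fn ((φ (ofAdd 1))⁻¹ n) = h⁻¹ * (h * fn ((φ (ofAdd 1))⁻¹ n) * h⁻¹) * h := by group
        _ = h⁻¹ * fn n * h := by rw [← hconj, MulAut.apply_inv_self]
    rw [ofAdd_sub, map_div, div_eq_mul_inv, MulAut.mul_apply, ih, hinv]
    simp only [toAdd_div, toAdd_ofAdd]
    group

def liftInt (fn : N →* H) (h : H)
    (hcomm : fn.comp (φ (ofAdd 1)).toMonoidHom = (MulAut.conj h).toMonoidHom.comp fn) :
    N ⋊[φ] Multiplicative ℤ →* H :=
  lift fn (zpowersHom H h) (comp_aut_eq_conj_comp_of_ofAdd_one fn h hcomm)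

end SemidirectProduct

abbrev kleinBottleRels : Set (FreeGroup (Fin 2)) :=
  {FreeGroup.of 0 * FreeGroup.of 1 * FreeGroup.of 0 * (FreeGroup.of 1)⁻¹}

abbrev KleinBottleGroup := PresentedGroup kleinBottleRels

abbrev IntInvSemidirectProduct :=
  Multiplicative ℤ ⋊[zpowersHom _ (MulEquiv.inv (Multiplicative ℤ))] Multiplicative ℤ

namespace KleinBottleGroup

theorem of_one_mul_of_zero_mul_inv :
    (PresentedGroup.of 1 * PresentedGroup.of 0 * (PresentedGroup.of 1)⁻¹ : KleinBottleGroup) =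
      (PresentedGroup.of 0)⁻¹ := by
  have h : (PresentedGroup.of 0 * PresentedGroup.of 1 * PresentedGroup.of 0 *
      (PresentedGroup.of 1)⁻¹ : KleinBottleGroup) = 1 :=
    PresentedGroup.one_of_mem (rels := kleinBottleRels) rfl
  calc (PresentedGroup.of 1 * PresentedGroup.of 0 * (PresentedGroup.of 1)⁻¹ : KleinBottleGroup)
      = (PresentedGroup.of 0)⁻¹ * (PresentedGroup.of 0 * PresentedGroup.of 1 *
          PresentedGroup.of 0 * (PresentedGroup.of 1)⁻¹) := by group
    _ = (PresentedGroup.of 0)⁻¹ := by rw [h, mul_one]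

theorem lift_rel_eq_one : ∀ r ∈ kleinBottleRels,
    FreeGroup.lift ![(inl (ofAdd 1) : IntInvSemidirectProduct), inr (ofAdd 1)] r = 1 := by
  rintro _ rfl
  have haut : (inr (ofAdd 1) * inl (ofAdd 1) * inr (ofAdd 1)⁻¹ : IntInvSemidirectProduct) =
      inl (ofAdd 1)⁻¹ := by
    rw [← inl_aut]; rfl
  simp only [map_mul, map_inv, FreeGroup.lift_apply_of, Matrix.cons_val_zero, Matrix.cons_val_one]
  calc (inl (ofAdd 1) * inr (ofAdd 1) * inl (ofAdd 1) * (inr (ofAdd 1))⁻¹ : IntInvSemidirectProduct)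
      = inl (ofAdd 1) * (inr (ofAdd 1) * inl (ofAdd 1) * inr (ofAdd 1)⁻¹) := by
        simp only [map_inv, mul_assoc]
    _ = 1 := by rw [haut, ← map_mul, mul_inv_cancel, map_one]

noncomputable def mulEquivIntInvSemidirectProduct : KleinBottleGroup ≃* IntInvSemidirectProduct :=
  MonoidHom.toMulEquiv (PresentedGroup.toGroup lift_rel_eq_one)
    (liftInt (zpowersHom _ (PresentedGroup.of 0)) (PresentedGroup.of 1)
      (MonoidHom.ext_mint (by simp [of_one_mul_of_zero_mul_inv])))
    (PresentedGroup.ext fun i => by fin_cases i <;> simp [liftInt, PresentedGroup.toGroup.of])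
    (SemidirectProduct.hom_ext (MonoidHom.ext_mint (by simp [liftInt, PresentedGroup.toGroup.of]))
      (MonoidHom.ext_mint (by simp [liftInt, PresentedGroup.toGroup.of])))

end KleinBottleGroup

/-- A group `E` is an extension of the infinite cyclic group by the infinite cyclic group
iff `E ≅ ℤ × ℤ` or `E` is the Klein bottle group `⟨g₁, g₂ ∣ g₁ g₂ g₁ = g₂⟩`. -/
theorem crossed_product_infinite_cyclic_by_infinite_cyclic (E : Type*) [Group E] :
    (∃ N : Subgroup E, ∃ hN : N.Normal,
        Nonempty (N ≃* Multiplicative ℤ) ∧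
        (haveI := hN; Nonempty (E ⧸ N ≃* Multiplicative ℤ))) ↔
      (Nonempty (E ≃* Multiplicative (ℤ × ℤ)) ∨
        Nonempty (E ≃* PresentedGroup
          ({FreeGroup.of 0 * FreeGroup.of 1 * FreeGroup.of 0 * (FreeGroup.of 1)⁻¹} :
            Set (FreeGroup (Fin 2))))) := by
  rw [GroupExtension.exists_normal_iff_nonempty, GroupExtension.nonempty_int_iff]
  have prodEquiv : Multiplicative ℤ ⋊[1] Multiplicative ℤ ≃* Multiplicative (ℤ × ℤ) :=
    mulEquivProd.trans (MulEquiv.prodMultiplicative ℤ ℤ).symm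
  constructor
  · rintro ⟨φ, ⟨f⟩⟩
    rcases MonoidHom.eq_one_or_eq_zpowersHom_inv φ with rfl | rfl
    · exact .inl ⟨f.trans prodEquiv⟩
    · exact .inr ⟨f.trans KleinBottleGroup.mulEquivIntInvSemidirectProduct.symm⟩
  · rintro (⟨⟨f⟩⟩ | ⟨⟨f⟩⟩)
    · exact ⟨1, ⟨f.trans prodEquiv.symm⟩⟩
    · exact ⟨_, ⟨f.trans KleinBottleGroup.mulEquivIntInvSemidirectProduct⟩⟩
end

section
/- Let m ≥ 2 be a natural number and let f : ZMod m × ZMod m → ℤ be a symmetric normalized 2-cocycle with values in ℤ, and let S_m = Σ_{k=0}^{m−1} f(1, k) ∈ ℤ. Then the twisted product group ℤ ×^f ZMod m is isomorphic to the presented group ⟨g, h ∣ g·h·g^(−1)·h^(−1), h^m·g^(−S_m)⟩. -/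
/-!
The generators go to `a = (1, 0)` and `b = (0, 1)` of `ℤ ×^f ZMod m`: they commute, and
`bʲ = (∑_{k<j} f(1, k), j)`, so `bᵐ = a^{S_m}` and the presentation maps onto the twisted product,
with `aⁱbʲ = (i + ∑_{k<j} f(1, k), j)`. Conversely the two relations bring every element of the
presented group into the form `gⁱhʲ` with `0 ≤ j < m`, and such an element maps to `(0, 0)` only
when `j = 0` and then `i = 0`; hence the map is injective.
-/

open Finset

section NormalForm

variable {H : Type*} [Group H] {x y : H} {m : ℕ} {s : ℤ}

theorem pow_eq_zpow_mul_pow_mod (hy : y ^ m = x ^ s) (j : ℕ) :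
    y ^ j = x ^ (s * (j / m : ℕ)) * y ^ (j % m) := by
  conv_lhs => rw [← Nat.div_add_mod j m, pow_add, pow_mul, hy, ← zpow_natCast, ← zpow_mul]

theorem exists_eq_zpow_mul_pow_of_mem_closure (hxy : Commute x y) (hy : y ^ m = x ^ s)
    (hm : m ≠ 0) {p : H} (hp : p ∈ Subgroup.closure {x, y}) :
    ∃ (i : ℤ) (j : ℕ), j < m ∧ p = x ^ i * y ^ j := by
  suffices ∃ (i : ℤ) (j : ℕ), p = x ^ i * y ^ j by
    obtain ⟨i, j, rfl⟩ := this
    refine ⟨i + s * (j / m : ℕ), j % m, Nat.mod_lt _ (Nat.pos_of_ne_zero hm), ?_⟩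
    rw [pow_eq_zpow_mul_pow_mod hy j, ← mul_assoc, ← zpow_add]
  have y_mul (i : ℤ) (j : ℕ) : y * (x ^ i * y ^ j) = x ^ i * y ^ (j + 1) := by
    rw [← mul_assoc, ← (hxy.zpow_left i).eq, mul_assoc, pow_succ']
  induction hp using Subgroup.closure_induction_left with
  | one => exact ⟨0, 0, by simp⟩
  | mul_left z hz p _ ih =>
    obtain ⟨i, j, rfl⟩ := ih
    rcases hz with rfl | rfl
    · exact ⟨1 + i, j, by rw [zpow_add, zpow_one, mul_assoc]⟩
    · exact ⟨i, j + 1, y_mul i j⟩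
  | inv_mul_cancel z hz p _ ih =>
    obtain ⟨i, j, rfl⟩ := ih
    rcases hz with rfl | rfl
    · exact ⟨-1 + i, j, by rw [zpow_add, zpow_neg_one, mul_assoc]⟩
    · -- `y⁻¹ = x⁻ˢ yᵐ⁻¹`
      refine ⟨i - s, j + (m - 1), inv_mul_eq_iff_eq_mul.mpr ?_⟩
      rw [y_mul, add_assoc, Nat.sub_add_cancel (Nat.one_le_iff_ne_zero.mpr hm), add_comm j,
        pow_add, hy, ← mul_assoc, ← zpow_add, sub_add_cancel]

end NormalForm

def commPowRelators (m : ℕ) (s : ℤ) : Set (FreeGroup (Fin 2)) :=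
  {FreeGroup.of 0 * FreeGroup.of 1 * (FreeGroup.of 0)⁻¹ * (FreeGroup.of 1)⁻¹,
    FreeGroup.of 1 ^ m * FreeGroup.of 0 ^ (-s)}

namespace commPowRelators

variable {m : ℕ} {s : ℤ}

theorem lift_eq_one {K : Type*} [Group K] {u v : K} (huv : Commute u v) (hv : v ^ m = u ^ s) :
    ∀ r ∈ commPowRelators m s, FreeGroup.lift ![u, v] r = 1 := by
  rintro r (rfl | rfl) <;> simp [huv.eq, hv]

local notation "P" => PresentedGroup (commPowRelators m s)

theorem commute_of : Commute (PresentedGroup.of 0 : P) (PresentedGroup.of 1) :=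
  commutatorElement_eq_one_iff_commute.mp <| PresentedGroup.one_of_mem (Set.mem_insert _ _)

theorem of_one_pow : (PresentedGroup.of 1 : P) ^ m = PresentedGroup.of 0 ^ s := by
  have h := PresentedGroup.one_of_mem (Set.mem_insert_of_mem _ rfl : _ ∈ commPowRelators m s)
  rw [map_mul, map_pow, map_zpow] at h
  exact (mul_eq_one_iff_eq_inv.mp h).trans ((congrArg _ (zpow_neg _ s)).trans (inv_inv _))

theorem exists_eq_zpow_mul_pow [NeZero m] (p : P) :
    ∃ (i : ℤ) (j : ℕ), j < m ∧ p = PresentedGroup.of 0 ^ i * PresentedGroup.of 1 ^ j :=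
  exists_eq_zpow_mul_pow_of_mem_closure commute_of of_one_pow (NeZero.ne m) <|
    PresentedGroup.generated_by _ _
      (fun i => by fin_cases i <;> exact Subgroup.subset_closure (by simp)) p

end commPowRelators

structure IsTwistedProduct {m : ℕ} {G : Type*} [Group G] (f : ZMod m × ZMod m → ℤ)
    (e : G ≃ ℤ × ZMod m) : Prop where
  map_one : e 1 = (0, 0)
  map_mul : ∀ x y : G, e (x * y) = ((e x).1 + (e y).1 + f ((e x).2, (e y).2), (e x).2 + (e y).2)

namespace IsTwistedProduct

variable {m : ℕ} {G : Type*} [Group G] {f : ZMod m × ZMod m → ℤ} {e : G ≃ ℤ × ZMod m}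

theorem cocycle_zero_left (he : IsTwistedProduct f e) (z : ZMod m) : f (0, z) = 0 := by
  have h := congrArg Prod.fst (he.map_mul 1 (e.symm (0, z)))
  simp only [one_mul, e.apply_symm_apply, he.map_one] at h
  omega

theorem cocycle_zero_right (he : IsTwistedProduct f e) (z : ZMod m) : f (z, 0) = 0 := by
  have h := congrArg Prod.fst (he.map_mul (e.symm (0, z)) 1)
  simp only [mul_one, e.apply_symm_apply, he.map_one] at h
  omega

theorem apply_symm_mul (he : IsTwistedProduct f e) (n : ℤ) (g : G) :
    e (e.symm (n, 0) * g) = (n + (e g).1, (e g).2) := by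
  simp [he.map_mul, he.cocycle_zero_left]

theorem apply_mul_symm (he : IsTwistedProduct f e) (g : G) (n : ℤ) :
    e (g * e.symm (n, 0)) = ((e g).1 + n, (e g).2) := by
  simp [he.map_mul, he.cocycle_zero_right]

theorem commute (he : IsTwistedProduct f e) : Commute (e.symm (1, 0)) (e.symm (0, 1)) :=
  e.injective <| by rw [he.apply_symm_mul, he.apply_mul_symm, add_comm]

theorem symm_zpow (he : IsTwistedProduct f e) (n : ℤ) : e.symm (1, 0) ^ n = e.symm (n, 0) := by
  induction n using Int.induction_on with
  | zero => rw [zpow_zero, eq_comm, e.symm_apply_eq, he.map_one]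
  | succ n ih => exact e.injective (by simp [zpow_add_one, ih, he.apply_mul_symm])
  | pred n ih =>
    rw [zpow_sub_one, ih, mul_inv_eq_iff_eq_mul]
    exact e.injective (by simp [he.apply_mul_symm])

theorem apply_pow (he : IsTwistedProduct f e) (j : ℕ) :
    e (e.symm (0, 1) ^ j) = (∑ k ∈ range j, f (1, k), (j : ZMod m)) := by
  induction j with
  | zero => simp [he.map_one]
  | succ j ih =>
    rw [pow_succ', he.map_mul, ih, e.apply_symm_apply, sum_range_succ]
    exact Prod.ext (by ring) (by push_cast; ring)

theorem apply_zpow_mul_pow (he : IsTwistedProduct f e) (i : ℤ) (j : ℕ) :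
    e (e.symm (1, 0) ^ i * e.symm (0, 1) ^ j) = (i + ∑ k ∈ range j, f (1, k), (j : ZMod m)) := by
  rw [he.symm_zpow, he.apply_symm_mul, he.apply_pow]

theorem pow_eq_zpow (he : IsTwistedProduct f e) :
    e.symm (0, 1) ^ m = e.symm (1, 0) ^ ∑ k ∈ range m, f (1, k) := by
  rw [he.symm_zpow, eq_comm, e.symm_apply_eq, he.apply_pow, ZMod.natCast_self]

theorem exists_eq_zpow_mul_pow [NeZero m] (he : IsTwistedProduct f e) (g : G) :
    ∃ (i : ℤ) (j : ℕ), g = e.symm (1, 0) ^ i * e.symm (0, 1) ^ j :=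
  ⟨(e g).1 - ∑ k ∈ range (e g).2.val, f (1, k), (e g).2.val,
    e.injective <| by simp [he.apply_zpow_mul_pow]⟩

theorem eq_zero_of_zpow_mul_pow_eq_one (he : IsTwistedProduct f e) {i : ℤ} {j : ℕ} (hj : j < m)
    (h : e.symm (1, 0) ^ i * e.symm (0, 1) ^ j = 1) : i = 0 ∧ j = 0 := by
  have h' := he.apply_zpow_mul_pow i j
  rw [h, he.map_one, Prod.ext_iff] at h'
  obtain ⟨hi, hj0⟩ := h'
  obtain rfl : j = 0 := Nat.eq_zero_of_dvd_of_lt ((ZMod.natCast_eq_zero_iff j m).mp hj0.symm) hj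
  simpa [eq_comm] using hi

end IsTwistedProduct

theorem twisted_product_with_int_iso_presented_group_general
    (m : ℕ) (hm : 2 ≤ m)
    (f : ZMod m × ZMod m → ℤ)
    (G : Type*) [Group G] (e : G ≃ ℤ × ZMod m)
    (hone : e 1 = (0, 0))
    (hmul : ∀ x y : G,
      e (x * y) = ((e x).1 + (e y).1 + f ((e x).2, (e y).2), (e x).2 + (e y).2)) :
    Nonempty (G ≃* PresentedGroup
      ({FreeGroup.of 0 * FreeGroup.of 1 * (FreeGroup.of 0)⁻¹ * (FreeGroup.of 1)⁻¹,
        FreeGroup.of 1 ^ m *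
          FreeGroup.of 0 ^ (-(∑ k ∈ Finset.range m, f (1, (k : ZMod m))))} :
        Set (FreeGroup (Fin 2)))) := by
  have : NeZero m := ⟨by omega⟩
  have he : IsTwistedProduct f e := ⟨hone, hmul⟩
  let φ := PresentedGroup.toGroup (commPowRelators.lift_eq_one he.commute he.pow_eq_zpow)
  have hφ (i : ℤ) (j : ℕ) : φ (PresentedGroup.of 0 ^ i * PresentedGroup.of 1 ^ j) =
      e.symm (1, 0) ^ i * e.symm (0, 1) ^ j := by
    simp [φ, PresentedGroup.toGroup.of]
  refine ⟨(MulEquiv.ofBijective φ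
    ⟨(injective_iff_map_eq_one φ).mpr fun p hp => ?_, fun g => ?_⟩).symm⟩
  · obtain ⟨i, j, hj, rfl⟩ := commPowRelators.exists_eq_zpow_mul_pow p
    obtain ⟨rfl, rfl⟩ := he.eq_zero_of_zpow_mul_pow_eq_one hj (hφ i j ▸ hp)
    simp
  · obtain ⟨i, j, rfl⟩ := he.exists_eq_zpow_mul_pow g
    exact ⟨_, hφ i j⟩

/-- The twisted product `ℤ ×^f ZMod m` is isomorphic to the presented group
`⟨g, h ∣ gh = hg, hᵐ = g^{S_m}⟩`, where `S_m = ∑_{k=0}^{m-1} f(1, k) ∈ ℤ`. -/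
theorem twisted_product_with_int_iso_presented_group
    (m : ℕ) (hm : 2 ≤ m)
    (f : ZMod m × ZMod m → ℤ)
    (hsym : ∀ g₁ g₂ : ZMod m, f (g₁, g₂) = f (g₂, g₁))
    (hnorm : f (0, 0) = 0)
    (hcoc : ∀ g₁ g₂ g₃ : ZMod m,
      f (g₁, g₂) + f (g₁ + g₂, g₃) = f (g₂, g₃) + f (g₁, g₂ + g₃))
    (G : Type*) [Group G] (e : G ≃ ℤ × ZMod m)
    (hone : e 1 = (0, 0))
    (hmul : ∀ x y : G,
      e (x * y) = ((e x).1 + (e y).1 + f ((e x).2, (e y).2), (e x).2 + (e y).2)) :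
    Nonempty (G ≃* PresentedGroup
      ({FreeGroup.of 0 * FreeGroup.of 1 * (FreeGroup.of 0)⁻¹ * (FreeGroup.of 1)⁻¹,
        FreeGroup.of 1 ^ m *
          FreeGroup.of 0 ^ (-(∑ k ∈ Finset.range m, f (1, (k : ZMod m))))} :
        Set (FreeGroup (Fin 2)))) :=
  twisted_product_with_int_iso_presented_group_general m hm f G e hone hmul
end

section
/- Let n, m ≥ 1 be natural numbers and i, j integers with 0 ≤ i < n and 0 ≤ j < n satisfying n ∣ i·(j−1) and n ∣ j^m − 1. Then the presented group ⟨a, b ∣ a^n, b^m·a^(−i), b^(−1)·a·b·a^(−j)⟩ is a finite group of cardinality m·n, the cyclic subgroup generated by the image of a is a normal subgroup of order n, and the quotient by this subgroup is cyclic of order m. -/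
/-!
The relations make `⟨a⟩` a cyclic group of order dividing `n`, normal because conjugation by
`b⁻¹` maps the finite group `⟨a⟩` into itself, and the quotient by it is generated by the image
of `b`, whose `m`-th power `aⁱ` dies; so `|P| ≤ mn`. For equality, `P` maps onto `ℤ/m` (killing
`a`), and onto the model `(ℤ/n ⋊ ℤ) ⧸ ⟨bᵐa⁻ⁱ⟩`, with `1 ∈ ℤ` acting by the unit `j⁻¹`. The two
divisibility conditions make `bᵐa⁻ⁱ` central, and since its `ℤ`-component `m` has
infinite order, `ℤ/n` embeds in the model, so `a` has order exactly `n`.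
-/

open Subgroup Multiplicative SemidirectProduct

theorem orderOf_eq_of_pow_eq_one_of_orderOf_map {M H : Type*} [Monoid M] [Monoid H] {x : M}
    {n : ℕ} (f : M →* H) (hx : x ^ n = 1) (hf : orderOf (f x) = n) : orderOf x = n :=
  Nat.dvd_antisymm (orderOf_dvd_of_pow_eq_one hx) (hf ▸ orderOf_map_dvd f x)

section GroupLemmas

variable {G : Type*} [Group G]

theorem Subgroup.normal_of_le_center {H : Subgroup G} (h : H ≤ center G) : H.Normal where
  conj_mem x hx g := by rw [mem_center_iff.1 (h hx) g, mul_inv_cancel_right]; exact hx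

theorem Subgroup.zpowers_normal_of_conj_mem {a b : G} (hgen : closure {a, b} = ⊤)
    (ha : IsOfFinOrder a) (hb : b⁻¹ * a * b ∈ zpowers a) : (zpowers a).Normal := by
  have : Finite (zpowers a) := ha.finite_zpowers.to_subtype
  have hb' : b⁻¹ ∈ normalizer (zpowers a : Set G) := by
    rw [mem_normalizer_iff_map_conj_eq]
    refine eq_of_le_of_card_ge ?_ (card_map_of_injective (MulEquiv.injective _)).ge
    rw [MonoidHom.map_zpowers, zpowers_le]
    simpa [MulAut.conj_apply] using hb
  rw [← normalizer_eq_top_iff, eq_top_iff, ← hgen, closure_le]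
  rintro x (rfl | rfl)
  · exact le_normalizer (mem_zpowers x)
  · simpa using hb'

theorem QuotientGroup.zpowers_mk_eq_top_of_closure_pair_eq_top {a b : G}
    (hgen : closure {a, b} = ⊤) (N : Subgroup G) [N.Normal] (ha : a ∈ N) :
    zpowers (b : G ⧸ N) = ⊤ := by
  rw [← map_top_of_surjective _ (mk'_surjective N), ← hgen, MonoidHom.map_closure,
    Set.image_pair, mk'_apply, (eq_one_iff a).2 ha, closure_insert_one, zpowers_eq_closure,
    mk'_apply]

end GroupLemmas

namespace SemidirectProduct

variable {N G : Type*} [CommGroup N] [CommGroup G] {φ : G →* MulAut N}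

theorem inr_mul_inl_mem_center {x : N} {g : G} (hg : φ g = 1) (hx : ∀ h, φ h x = x) :
    inr g * inl x ∈ center (N ⋊[φ] G) := by
  rw [mem_center_iff]
  intro z
  ext
  · simp [hg, hx, mul_comm]
  · simp [mul_comm]

theorem eq_one_of_inl_mem_zpowers {c : N ⋊[φ] G} (hc : ¬IsOfFinOrder c.right) {x : N}
    (hx : inl x ∈ zpowers c) : x = 1 := by
  obtain ⟨k, hk⟩ := hx
  have hk0 : k = 0 := by
    have := congrArg rightHom hk
    rw [map_zpow, rightHom_inl, rightHom_eq_right] at this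
    exact injective_zpow_iff_not_isOfFinOrder.2 hc (by simpa using this)
  simp only [hk0, zpow_zero] at hk
  exact inl_injective (hk.symm.trans (map_one inl).symm)

end SemidirectProduct

def MetacyclicRelations {H : Type*} [Group H] (n m : ℕ) (i j : ℤ) (x y : H) : Prop :=
  x ^ n = 1 ∧ y ^ m = x ^ i ∧ y⁻¹ * x * y = x ^ j

namespace MetacyclicModel

variable {n : ℕ} (u : (ZMod n)ˣ)

def action : Multiplicative ℤ →* MulAut (Multiplicative (ZMod n)) where
  toFun k := AddEquiv.toMultiplicative (DistribMulAction.toAddEquiv (ZMod n) (u ^ (-k.toAdd)))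
  map_one' := by ext; simp
  map_mul' k l := by ext; simp [zpow_add, mul_comm, mul_smul]

@[simp]
theorem action_apply (k : Multiplicative ℤ) (x : Multiplicative (ZMod n)) :
    action u k x = ofAdd (↑(u ^ (-k.toAdd)) * x.toAdd) := rfl

abbrev Cover := Multiplicative (ZMod n) ⋊[action u] Multiplicative ℤ

def genA : Cover u := inl (ofAdd 1)

def genB : Cover u := inr (ofAdd 1)

theorem genA_zpow (k : ℤ) : genA u ^ k = inl (ofAdd (k : ZMod n)) := by
  rw [genA, ← map_zpow, ← ofAdd_zsmul, zsmul_one]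

theorem genB_zpow (k : ℤ) : genB u ^ k = inr (ofAdd k) := by
  rw [genB, ← map_zpow, ← ofAdd_zsmul, zsmul_one, Int.cast_id]

theorem genA_pow_card : genA u ^ n = 1 := by
  rw [← zpow_natCast, genA_zpow]; simp

theorem genB_inv_mul_genA_mul_genB {j : ℤ} (hj : (u : ZMod n) = j) :
    (genB u)⁻¹ * genA u * genB u = genA u ^ j := by
  rw [genA_zpow, genA, genB, ← map_inv, ← inl_aut_inv, ← map_inv, ← ofAdd_neg, action_apply]
  simp [hj]

variable (i : ℤ) (m : ℕ)

def relator : Cover u := genB u ^ m * genA u ^ (-i)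

theorem relator_mem_center (hum : u ^ m = 1) (hiu : (u : ZMod n) * i = i) :
    relator u i m ∈ center (Cover u) := by
  rw [relator, ← zpow_natCast, genA_zpow, genB_zpow]
  refine inr_mul_inl_mem_center ?_ fun k ↦ ?_
  · ext x
    simp [hum]
  · have hu : u ∈ MulAction.stabilizer (ZMod n)ˣ (i : ZMod n) := hiu
    have hk : (u ^ k.toAdd)⁻¹ • (i : ZMod n) = i :=
      (MulAction.stabilizer _ _).inv_mem ((MulAction.stabilizer _ _).zpow_mem hu _)
    rw [Units.smul_def, smul_eq_mul] at hk
    simp [hk]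

abbrev Model := Cover u ⧸ normalClosure {relator u i m}

theorem orderOf_mk_genA (hm : m ≠ 0) (hum : u ^ m = 1) (hiu : (u : ZMod n) * i = i) :
    orderOf (genA u : Model u i m) = n := by
  have : (zpowers (relator u i m)).Normal :=
    normal_of_le_center (zpowers_le.2 (relator_mem_center u i m hum hiu))
  have hright : ¬IsOfFinOrder (relator u i m).right := by
    rw [relator, ← zpow_natCast, genA_zpow, genB_zpow, mul_right, right_inr, right_inl, mul_one]
    exact not_isOfFinOrder_of_isMulTorsionFree (by simpa using hm)
  have hinj : Function.Injective
      ((QuotientGroup.mk' (normalClosure {relator u i m})).comp (inl : _ →* Cover u)) := by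
    refine (injective_iff_map_eq_one _).2 fun x hx ↦ eq_one_of_inl_mem_zpowers hright ?_
    exact normalClosure_le_normal (by simp) ((QuotientGroup.eq_one_iff _).1 hx)
  exact (orderOf_injective _ hinj (ofAdd 1)).trans
    (by rw [orderOf_ofAdd_eq_addOrderOf, ZMod.addOrderOf_one])

theorem metacyclicRelations_genA_genB {j : ℤ} (hj : (u : ZMod n) = j) :
    MetacyclicRelations n m i j (genA u : Model u i m) (genB u) := by
  refine ⟨?_, ?_, ?_⟩
  · rw [← QuotientGroup.mk_pow, genA_pow_card, QuotientGroup.mk_one]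
  · rw [← QuotientGroup.mk_pow, ← QuotientGroup.mk_zpow, QuotientGroup.eq_iff_div_mem,
      div_eq_mul_inv, ← zpow_neg]
    exact subset_normalClosure rfl
  · rw [← QuotientGroup.mk_inv, ← QuotientGroup.mk_mul, ← QuotientGroup.mk_mul,
      genB_inv_mul_genA_mul_genB u hj, QuotientGroup.mk_zpow]

end MetacyclicModel

section Presentation

open PresentedGroup

variable (n m : ℕ) (i j : ℤ)

def metacyclicRelators : Set (FreeGroup (Fin 2)) :=
  {FreeGroup.of 0 ^ n, FreeGroup.of 1 ^ m * FreeGroup.of 0 ^ (-i),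
    (FreeGroup.of 1)⁻¹ * FreeGroup.of 0 * FreeGroup.of 1 * FreeGroup.of 0 ^ (-j)}

variable {n m i j}

theorem MetacyclicRelations.lift_eq_one {H : Type*} [Group H] {x y : H}
    (h : MetacyclicRelations n m i j x y) :
    ∀ r ∈ metacyclicRelators n m i j, FreeGroup.lift ![x, y] r = 1 := by
  obtain ⟨hx, hy, hxy⟩ := h
  simp [metacyclicRelators, hx, hy, hxy]

theorem metacyclicRelations_of :
    MetacyclicRelations n m i j (of 0 : PresentedGroup (metacyclicRelators n m i j)) (of 1) := by
  have h1 := one_of_mem (Set.mem_insert _ _ : _ ∈ metacyclicRelators n m i j)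
  have h2 := one_of_mem (Set.mem_insert_of_mem _ (Set.mem_insert _ _) :
    _ ∈ metacyclicRelators n m i j)
  have h3 := one_of_mem (Set.mem_insert_of_mem _ (Set.mem_insert_of_mem _ rfl) :
    _ ∈ metacyclicRelators n m i j)
  simp only [map_mul, map_pow, map_zpow, map_inv, zpow_neg, mul_inv_eq_one] at h1 h2 h3
  exact ⟨h1, h2, h3⟩

theorem PresentedGroup.closure_of_zero_of_one_eq_top (rels : Set (FreeGroup (Fin 2))) :
    closure {(of 0 : PresentedGroup rels), of 1} = ⊤ := by
  rw [← closure_range_of]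
  congr
  ext
  simp [Fin.exists_fin_two, eq_comm]

theorem orderOf_of_zero (hm : m ≠ 0) (hdvd1 : (n : ℤ) ∣ i * (j - 1))
    (hdvd2 : (n : ℤ) ∣ j ^ m - 1) :
    orderOf (of 0 : PresentedGroup (metacyclicRelators n m i j)) = n := by
  have hjm : (j : ZMod n) ^ m = 1 := by
    have := (ZMod.intCast_zmod_eq_zero_iff_dvd _ n).2 hdvd2
    push_cast at this
    exact sub_eq_zero.1 this
  let u := Units.ofPowEqOne _ m hjm hm
  have hu : (u : ZMod n) = j := Units.val_ofPowEqOne _ _ hjm hm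
  have hiu : (u : ZMod n) * i = i := by
    have := (ZMod.intCast_zmod_eq_zero_iff_dvd _ n).2 hdvd1
    push_cast at this
    rw [hu]
    linear_combination this
  refine orderOf_eq_of_pow_eq_one_of_orderOf_map
    (toGroup (MetacyclicModel.metacyclicRelations_genA_genB u i m hu).lift_eq_one)
    metacyclicRelations_of.1 ?_
  rw [toGroup.of]
  exact MetacyclicModel.orderOf_mk_genA u i m hm (Units.pow_ofPowEqOne _ _) hiu

theorem orderOf_mk_of_one
    [hN : (zpowers (of 0 : PresentedGroup (metacyclicRelators n m i j))).Normal] :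
    orderOf ((of 1 : PresentedGroup (metacyclicRelators n m i j)) :
      PresentedGroup (metacyclicRelators n m i j) ⧸ zpowers (of 0)) = m := by
  have hy : ofAdd (1 : ZMod m) ^ m = 1 ^ i := by
    rw [one_zpow, ← ofAdd_nsmul, nsmul_one, ZMod.natCast_self, ofAdd_zero]
  let ψ : PresentedGroup (metacyclicRelators n m i j) →* Multiplicative (ZMod m) :=
    toGroup (MetacyclicRelations.lift_eq_one ⟨one_pow n, hy, by simp⟩)
  have hker : zpowers (of 0) ≤ ψ.ker := by
    rw [zpowers_le, MonoidHom.mem_ker, toGroup.of]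
    rfl
  refine orderOf_eq_of_pow_eq_one_of_orderOf_map (QuotientGroup.lift _ ψ hker) ?_ ?_
  · rw [← QuotientGroup.mk_pow, metacyclicRelations_of.2.1, QuotientGroup.eq_one_iff]
    exact zpow_mem (mem_zpowers _) i
  · rw [QuotientGroup.lift_mk, toGroup.of]
    exact (orderOf_ofAdd_eq_addOrderOf _).trans (ZMod.addOrderOf_one m)

end Presentation

theorem presented_crossed_product_structure_general
    (n m : ℕ) (hn : 1 ≤ n) (hm : 1 ≤ m) (i j : ℤ)
    (hdvd1 : (n : ℤ) ∣ i * (j - 1)) (hdvd2 : (n : ℤ) ∣ j ^ m - 1) :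
    let rels : Set (FreeGroup (Fin 2)) :=
      {FreeGroup.of 0 ^ n,
        FreeGroup.of 1 ^ m * FreeGroup.of 0 ^ (-i),
        (FreeGroup.of 1)⁻¹ * FreeGroup.of 0 * FreeGroup.of 1 * FreeGroup.of 0 ^ (-j)}
    let P := PresentedGroup rels
    let A : Subgroup P := Subgroup.zpowers (PresentedGroup.of 0)
    Finite P ∧ Nat.card P = m * n ∧ Nat.card A = n ∧
      ∃ hN : A.Normal,
        (haveI := hN; IsCyclic (P ⧸ A) ∧ Nat.card (P ⧸ A) = m) := by
  intro rels P A
  obtain ⟨ha, -, hab⟩ := metacyclicRelations_of (n := n) (m := m) (i := i) (j := j)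
  have hgen := PresentedGroup.closure_of_zero_of_one_eq_top rels
  have hA : A.Normal := zpowers_normal_of_conj_mem hgen
    (isOfFinOrder_iff_pow_eq_one.2 ⟨n, hn, ha⟩) ⟨j, hab.symm⟩
  have hQ : zpowers ((PresentedGroup.of 1 : P) : P ⧸ A) = ⊤ :=
    QuotientGroup.zpowers_mk_eq_top_of_closure_pair_eq_top hgen A (mem_zpowers _)
  have hcardA : Nat.card A = n :=
    (Nat.card_zpowers _).trans (orderOf_of_zero (by omega) hdvd1 hdvd2)
  have hcardQ : Nat.card (P ⧸ A) = m := by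
    rw [← card_top, ← hQ, Nat.card_zpowers]
    exact orderOf_mk_of_one (hN := hA)
  have hcardP : Nat.card P = m * n := by
    rw [A.card_eq_card_quotient_mul_card_subgroup, hcardQ, hcardA]
  exact ⟨Nat.finite_of_card_ne_zero (by rw [hcardP]; positivity), hcardP, hcardA, hA,
    isCyclic_iff_exists_zpowers_eq_top.2 ⟨_, hQ⟩, hcardQ⟩

/-- The presented group `⟨a, b ∣ aⁿ, bᵐ a⁻ⁱ, b⁻¹ a b a⁻ʲ⟩` (with `n ∣ i(j-1)` and
`n ∣ jᵐ - 1`) is a finite group of cardinality `m·n`; the cyclic subgroup generated by the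
image of `a` is a normal subgroup of order `n`, and the quotient by it is cyclic of
order `m`. -/
theorem presented_crossed_product_structure
    (n m : ℕ) (hn : 1 ≤ n) (hm : 1 ≤ m) (i j : ℤ)
    (hi0 : 0 ≤ i) (hin : i < n) (hj0 : 0 ≤ j) (hjn : j < n)
    (hdvd1 : (n : ℤ) ∣ i * (j - 1)) (hdvd2 : (n : ℤ) ∣ j ^ m - 1) :
    let rels : Set (FreeGroup (Fin 2)) :=
      {FreeGroup.of 0 ^ n,
        FreeGroup.of 1 ^ m * FreeGroup.of 0 ^ (-i),
        (FreeGroup.of 1)⁻¹ * FreeGroup.of 0 * FreeGroup.of 1 * FreeGroup.of 0 ^ (-j)}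
    let P := PresentedGroup rels
    let A : Subgroup P := Subgroup.zpowers (PresentedGroup.of 0)
    Finite P ∧ Nat.card P = m * n ∧ Nat.card A = n ∧
      ∃ hN : A.Normal,
        (haveI := hN; IsCyclic (P ⧸ A) ∧ Nat.card (P ⧸ A) = m) :=
  presented_crossed_product_structure_general n m hn hm i j hdvd1 hdvd2
end
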